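/- arXiv:2502.13368 — 3 statements merged into one kernel-verified Lean document; each statement's English description precedes it below -/
import Mathlib

section
/- In a flow network with integer edge capacities, a source s and a sink t, there exists a maximum flow of minimum cost that is integral, i.e., assigns an integer value to every edge. -/
open Finset

variable {V : Type*} [Fintype V] [DecidableEq V]

/-- `f` is a flow on the network with integer capacities `c`, source `s` and
sink `t`: it is nonnegative, respects capacities, and is conserved at every
vertex other than `s` and `t`. -/
def IsFlow (c : V → V → ℕ) (s t : V) (f : V → V → ℝ) : Prop :=
  (∀ u v, 0 ≤ f u v ∧ f u v ≤ (c u v : ℝ)) ∧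
  ∀ v, v ≠ s → v ≠ t → ∑ u, f u v = ∑ u, f v u

/-- The value of a flow: net flow out of the source `s`. -/
noncomputable def flowValue (s : V) (f : V → V → ℝ) : ℝ :=
  ∑ u, f s u - ∑ u, f u s

/-- The cost of a flow with respect to edge costs `w`. -/
noncomputable def flowCost (w : V → V → ℝ) (f : V → V → ℝ) : ℝ :=
  ∑ u, ∑ v, f u v * w u v

open Filter Topology

/-!
The minimum-cost maximum flows form a nonempty compact set, which therefore has an extreme point
`f` (Krein–Milman). Suppose some `f u v` is not an integer and let `F` be the set of such edges.
The net flow of `f` at a vertex other than `s`, `t` is an integer, so no such vertex meets exactly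
one edge of `F`. Counting endpoints, `F` has more edges than there are independent conservation
constraints at the vertices it meets, and rank–nullity gives a nonzero `d` supported on `F` and
conserved away from `s` and `t`. Fractional edges lie strictly between their integral capacity
bounds, so `f ± ε • d` are flows for small `ε > 0`; optimality forces `d` to have zero value and
zero cost, so `f ± ε • d` are again optimal and `f` is their midpoint, a contradiction.
-/

def netFlow (f : V → V → ℝ) (v : V) : ℝ :=
  ∑ u, f u v - ∑ u, f v u

/-- The number of pairs of `F` incident to `v`, a loop `(v, v)` counting twice. -/
def vertexDegree (F : Finset (V × V)) (v : V) : ℕ :=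
  #{u | (u, v) ∈ F} + #{u | (v, u) ∈ F}

theorem sum_vertexDegree (F : Finset (V × V)) : ∑ v, vertexDegree F v = 2 * #F := by
  have hF : ∑ u, ∑ v, (if (u, v) ∈ F then 1 else 0) = #F := by
    rw [← Fintype.sum_prod_type' (fun u v => if (u, v) ∈ F then 1 else 0), ← card_filter]
    simp
  simp only [vertexDegree, card_filter, sum_add_distrib]
  rw [sum_comm, hF]
  ring

omit [DecidableEq V] in
theorem sum_netFlow (d : V → V → ℝ) : ∑ v, netFlow d v = 0 := by
  simp only [netFlow, sum_sub_distrib]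
  rw [sum_comm, sub_self]

theorem netFlow_eq_zero_of_vertexDegree_eq_zero {F : Finset (V × V)} {d : V → V → ℝ}
    (hd : ∀ u v, (u, v) ∉ F → d u v = 0) {v : V} (hv : vertexDegree F v = 0) :
    netFlow d v = 0 := by
  simp only [vertexDegree, Nat.add_eq_zero_iff, card_eq_zero, filter_eq_empty_iff, mem_univ,
    true_imp_iff] at hv
  simp [netFlow, hd _ _ (hv.1 (x := _)), hd _ _ (hv.2 (x := _))]

theorem exists_supported_netFlow_eq_zero_of_card_lt (F : Finset (V × V)) (W : Finset V)
    (hW : #W < #F) :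
    ∃ d : V → V → ℝ, d ≠ 0 ∧ (∀ u v, (u, v) ∉ F → d u v = 0) ∧ ∀ v ∈ W, netFlow d v = 0 := by
  let Φ : (V → V → ℝ) →ₗ[ℝ] (W → ℝ) × ((Fᶜ : Finset (V × V)) → ℝ) :=
    { toFun d := (fun v => netFlow d v, fun p => d p.1.1 p.1.2)
      map_add' d e := by ext <;> simp [netFlow, sum_add_distrib]; ring
      map_smul' a d := by ext <;> simp [netFlow, mul_sum, mul_sub] }
  have hdim : Module.finrank ℝ ((W → ℝ) × ((Fᶜ : Finset (V × V)) → ℝ))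
      < Module.finrank ℝ (V → V → ℝ) := by
    have := card_le_univ F
    simp only [Module.finrank_prod, Module.finrank_fintype_fun_eq_card, Module.finrank_pi_fintype,
      Fintype.card_coe, card_compl, Fintype.card_prod, sum_const, card_univ, smul_eq_mul] at this ⊢
    omega
  obtain ⟨d, hd, hd0⟩ :=
    (Submodule.ne_bot_iff _).1 (LinearMap.ker_ne_bot_of_finrank_lt (f := Φ) hdim)
  obtain ⟨hdW, hdF⟩ := Prod.mk_eq_zero.1 (LinearMap.mem_ker.1 hd)
  exact ⟨d, hd0, fun u v huv => congr_fun hdF ⟨(u, v), mem_compl.2 huv⟩,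
    fun v hv => congr_fun hdW ⟨v, hv⟩⟩

theorem exists_supported_netFlow_eq_zero_of_two_le_vertexDegree (F : Finset (V × V))
    (R : Finset V) (hF : F.Nonempty)
    (hdeg : ∀ v ∉ R, vertexDegree F v ≠ 0 → 2 ≤ vertexDegree F v) :
    ∃ d : V → V → ℝ, d ≠ 0 ∧ (∀ u v, (u, v) ∉ F → d u v = 0) ∧ ∀ v ∉ R, netFlow d v = 0 := by
  -- The row of `r` is left out of the count; if `r ∉ R` it is recovered from `sum_netFlow`.
  obtain ⟨r, hr, hrR⟩ : ∃ r, vertexDegree F r ≠ 0 ∧ (r ∉ R → ∀ v ∈ R, vertexDegree F v = 0) := by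
    by_cases h : ∃ v ∈ R, vertexDegree F v ≠ 0
    · obtain ⟨v, hvR, hv⟩ := h
      exact ⟨v, hv, absurd hvR⟩
    · push Not at h
      obtain ⟨⟨a, b⟩, hab⟩ := hF
      refine ⟨a, ?_, fun _ => h⟩
      have : b ∈ ({u | (a, u) ∈ F} : Finset V) := by simpa using hab
      simp only [vertexDegree]
      have := card_pos.2 ⟨b, this⟩
      omega
  set W : Finset V := {v | v ∉ R ∧ v ≠ r ∧ vertexDegree F v ≠ 0}
  have hrW : r ∉ W := by simp [W]
  have hW : #W < #F := by
    have : #W • 2 + 1 ≤ 2 * #F :=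
      calc #W • 2 + 1 ≤ ∑ v ∈ W, vertexDegree F v + vertexDegree F r := by
            gcongr
            · exact card_nsmul_le_sum _ _ _ fun v hv => by simp_all [W]
            · omega
        _ = ∑ v ∈ insert r W, vertexDegree F v := by rw [sum_insert hrW, add_comm]
        _ ≤ ∑ v, vertexDegree F v := sum_le_univ_sum_of_nonneg fun _ => Nat.zero_le _
        _ = 2 * #F := sum_vertexDegree F
    rw [smul_eq_mul] at this
    omega
  obtain ⟨d, hd0, hdF, hdW⟩ := exists_supported_netFlow_eq_zero_of_card_lt F W hW
  have hoff : ∀ v, v ∉ R → v ≠ r → netFlow d v = 0 := fun v hvR hvr => by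
    by_cases hv : vertexDegree F v = 0
    · exact netFlow_eq_zero_of_vertexDegree_eq_zero hdF hv
    · exact hdW v (by simp [W, hvR, hvr, hv])
  refine ⟨d, hd0, hdF, fun v hvR => ?_⟩
  obtain rfl | hvr := eq_or_ne v r
  · have hothers : ∀ u ∈ univ.erase v, netFlow d u = 0 := fun u hu => by
      by_cases huR : u ∈ R
      · exact netFlow_eq_zero_of_vertexDegree_eq_zero hdF (hrR hvR u huR)
      · exact hoff u huR (ne_of_mem_erase hu)
    simpa [← add_sum_erase _ _ (mem_univ v), sum_eq_zero hothers] using sum_netFlow d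
  · exact hoff v hvR hvr

theorem AddSubgroup.sum_notMem_of_card_filter_notMem_eq_one {ι G : Type*} [AddCommGroup G]
    (H : AddSubgroup G) {s : Finset ι} {x : ι → G} [DecidablePred (x · ∉ H)]
    (h : #{i ∈ s | x i ∉ H} = 1) : ∑ i ∈ s, x i ∉ H := by
  obtain ⟨i, hi⟩ := Finset.card_eq_one.1 h
  have hi' : i ∈ ({i ∈ s | x i ∉ H} : Finset ι) := hi ▸ mem_singleton_self i
  have hrest : ∑ j ∈ s with ¬x j ∉ H, x j ∈ H :=
    H.sum_mem fun j hj => not_not.1 (Finset.mem_filter.1 hj).2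
  rw [← sum_filter_add_sum_filter_not s (x · ∉ H), hi, sum_singleton,
    H.add_mem_cancel_right hrest]
  exact (Finset.mem_filter.1 hi').2

open Classical in
theorem vertexDegree_ne_one_of_netFlow_mem (H : AddSubgroup ℝ) {f : V → V → ℝ} {v : V}
    (hv : netFlow f v ∈ H) : vertexDegree {p | f p.1 p.2 ∉ H} v ≠ 1 := by
  intro h1
  simp only [vertexDegree, mem_filter, mem_univ, true_and] at h1
  have hsum : ∀ y : V → ℝ, #{u | y u ∉ H} = 0 → ∑ u, y u ∈ H := fun y hy =>
    H.sum_mem fun u _ => by simpa using filter_eq_empty_iff.1 (card_eq_zero.1 hy) (mem_univ u)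
  rcases (by omega : (#{u | f u v ∉ H} = 1 ∧ #{u | f v u ∉ H} = 0) ∨
      (#{u | f u v ∉ H} = 0 ∧ #{u | f v u ∉ H} = 1)) with ⟨hin, hout⟩ | ⟨hin, hout⟩
  · exact H.sum_notMem_of_card_filter_notMem_eq_one hin <| by
      simpa [netFlow] using H.add_mem hv (hsum _ hout)
  · exact H.sum_notMem_of_card_filter_notMem_eq_one hout <| by
      simpa [netFlow] using H.sub_mem (hsum _ hin) hv

theorem exists_supported_netFlow_eq_zero_of_notMem (H : AddSubgroup ℝ) {f : V → V → ℝ} {s t : V}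
    (hnet : ∀ v, v ≠ s → v ≠ t → netFlow f v ∈ H) {a b : V} (hab : f a b ∉ H) :
    ∃ d : V → V → ℝ, d ≠ 0 ∧ (∀ u v, f u v ∈ H → d u v = 0) ∧
      ∀ v, v ≠ s → v ≠ t → netFlow d v = 0 := by
  classical
  have hdeg (v : V) (hv : v ∉ ({s, t} : Finset V))
      (h0 : vertexDegree {p | f p.1 p.2 ∉ H} v ≠ 0) : 2 ≤ vertexDegree {p | f p.1 p.2 ∉ H} v := by
    simp only [mem_insert, mem_singleton, not_or] at hv
    have := vertexDegree_ne_one_of_netFlow_mem H (hnet v hv.1 hv.2)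
    omega
  obtain ⟨d, hd0, hdF, hdR⟩ := exists_supported_netFlow_eq_zero_of_two_le_vertexDegree
    {p | f p.1 p.2 ∉ H} {s, t} ⟨(a, b), by simpa using hab⟩ hdeg
  exact ⟨d, hd0, fun u v huv => hdF u v (by simpa using huv),
    fun v hs ht => hdR v (by simp [hs, ht])⟩

section

omit [DecidableEq V]

theorem IsFlow.netFlow_eq_zero {c : V → V → ℕ} {s t : V} {f : V → V → ℝ} (hf : IsFlow c s t f)
    {v : V} (hs : v ≠ s) (ht : v ≠ t) : netFlow f v = 0 :=
  sub_eq_zero.2 (hf.2 v hs ht)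

theorem IsFlow.eventually_add_smul {c : V → V → ℕ} {s t : V} {f d : V → V → ℝ}
    (hf : IsFlow c s t f) (hslack : ∀ u v, d u v ≠ 0 → 0 < f u v ∧ f u v < c u v)
    (hd : ∀ v, v ≠ s → v ≠ t → netFlow d v = 0) :
    ∀ᶠ ε in 𝓝 (0 : ℝ), IsFlow c s t (f + ε • d) := by
  have hbox : ∀ u v, ∀ᶠ ε in 𝓝 (0 : ℝ), 0 ≤ f u v + ε * d u v ∧ f u v + ε * d u v ≤ c u v := by
    intro u v
    by_cases huv : d u v = 0
    · exact Eventually.of_forall fun _ => by simpa [huv] using hf.1 u v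
    have hlim : Tendsto (fun ε : ℝ => f u v + ε * d u v) (𝓝 0) (𝓝 (f u v)) := by
      have : Continuous fun ε : ℝ => f u v + ε * d u v := by fun_prop
      simpa using this.tendsto 0
    exact (hlim.eventually (Ioo_mem_nhds (hslack u v huv).1 (hslack u v huv).2)).mono
      fun _ hε => ⟨hε.1.le, hε.2.le⟩
  filter_upwards [eventually_all.2 fun u => eventually_all.2 (hbox u)] with ε hε
  refine ⟨hε, fun v hs ht => sub_eq_zero.1 ?_⟩
  have := hd v hs ht
  simp only [netFlow, Pi.add_apply, Pi.smul_apply, smul_eq_mul, sum_add_distrib,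
    ← mul_sum] at this ⊢
  rw [← hf.netFlow_eq_zero hs ht, netFlow]
  linear_combination ε * this

theorem IsFlow.exists_add_smul_and_sub_smul {c : V → V → ℕ} {s t : V} {f d : V → V → ℝ}
    (hf : IsFlow c s t f) (hslack : ∀ u v, d u v ≠ 0 → 0 < f u v ∧ f u v < c u v)
    (hd : ∀ v, v ≠ s → v ≠ t → netFlow d v = 0) :
    ∃ ε : ℝ, 0 < ε ∧ IsFlow c s t (f + ε • d) ∧ IsFlow c s t (f - ε • d) := by
  have hadd := hf.eventually_add_smul hslack hd
  have hsub : ∀ᶠ ε in 𝓝 (0 : ℝ), IsFlow c s t (f - ε • d) := by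
    simpa [sub_eq_add_neg] using (continuous_neg.tendsto' (0 : ℝ) 0 neg_zero).eventually hadd
  obtain ⟨ε, ⟨h₁, h₂⟩, hε⟩ :=
    (((hadd.and hsub).filter_mono nhdsWithin_le_nhds).and self_mem_nhdsWithin).exists
      (f := 𝓝[>] 0)
  exact ⟨ε, hε, h₁, h₂⟩

theorem flowValue_add (s : V) (f e : V → V → ℝ) :
    flowValue s (f + e) = flowValue s f + flowValue s e := by
  simp only [flowValue, Pi.add_apply, sum_add_distrib]
  ring

theorem flowValue_sub (s : V) (f e : V → V → ℝ) :
    flowValue s (f - e) = flowValue s f - flowValue s e := by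
  simp only [flowValue, Pi.sub_apply, sum_sub_distrib]
  ring

theorem flowCost_add (w f e : V → V → ℝ) : flowCost w (f + e) = flowCost w f + flowCost w e := by
  simp only [flowCost, Pi.add_apply, add_mul, sum_add_distrib]

theorem flowCost_sub (w f e : V → V → ℝ) : flowCost w (f - e) = flowCost w f - flowCost w e := by
  simp only [flowCost, Pi.sub_apply, sub_mul, sum_sub_distrib]

def IsMaxFlow (c : V → V → ℕ) (s t : V) (f : V → V → ℝ) : Prop :=
  IsFlow c s t f ∧ ∀ g, IsFlow c s t g → flowValue s g ≤ flowValue s f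

def IsMinCostMaxFlow (c : V → V → ℕ) (w : V → V → ℝ) (s t : V) (f : V → V → ℝ) : Prop :=
  IsMaxFlow c s t f ∧ ∀ g, IsMaxFlow c s t g → flowCost w f ≤ flowCost w g

theorem IsMinCostMaxFlow.add_and_sub {c : V → V → ℕ} {w : V → V → ℝ} {s t : V}
    {f e : V → V → ℝ} (hf : IsMinCostMaxFlow c w s t f) (h₁ : IsFlow c s t (f + e))
    (h₂ : IsFlow c s t (f - e)) :
    IsMinCostMaxFlow c w s t (f + e) ∧ IsMinCostMaxFlow c w s t (f - e) := by
  have hvalue : flowValue s e = 0 := by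
    linarith [flowValue_add s f e, flowValue_sub s f e, hf.1.2 _ h₁, hf.1.2 _ h₂]
  have hmax₁ : IsMaxFlow c s t (f + e) :=
    ⟨h₁, fun g hg => by simpa [flowValue_add, hvalue] using hf.1.2 g hg⟩
  have hmax₂ : IsMaxFlow c s t (f - e) :=
    ⟨h₂, fun g hg => by simpa [flowValue_sub, hvalue] using hf.1.2 g hg⟩
  have hcost : flowCost w e = 0 := by
    linarith [flowCost_add w f e, flowCost_sub w f e, hf.2 _ hmax₁, hf.2 _ hmax₂]
  exact ⟨⟨hmax₁, fun g hg => by simpa [flowCost_add, hcost] using hf.2 g hg⟩,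
    ⟨hmax₂, fun g hg => by simpa [flowCost_sub, hcost] using hf.2 g hg⟩⟩

theorem IsCompact.isCompact_setOf_forall_le {X Y : Type*} [TopologicalSpace X]
    [TopologicalSpace Y] [LinearOrder Y] [OrderClosedTopology Y] {K : Set X} (hK : IsCompact K)
    {φ : X → Y} (hφ : Continuous φ) : IsCompact {x | x ∈ K ∧ ∀ y ∈ K, φ y ≤ φ x} := by
  have : IsClosed {x | ∀ y ∈ K, φ y ≤ φ x} := by
    simp only [Set.ofPred_forall]
    exact isClosed_iInter fun y => isClosed_iInter fun _ => isClosed_le continuous_const hφ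
  exact hK.inter_right this

theorem IsCompact.nonempty_setOf_forall_le {X Y : Type*} [TopologicalSpace X]
    [TopologicalSpace Y] [LinearOrder Y] [OrderClosedTopology Y] {K : Set X} (hK : IsCompact K)
    (hne : K.Nonempty) {φ : X → Y} (hφ : Continuous φ) :
    {x | x ∈ K ∧ ∀ y ∈ K, φ y ≤ φ x}.Nonempty :=
  let ⟨x, hxK, hx⟩ := hK.exists_isMaxOn hne hφ.continuousOn
  ⟨x, hxK, isMaxOn_iff.1 hx⟩

theorem continuous_flowValue (s : V) : Continuous (flowValue s) := by
  unfold flowValue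
  fun_prop

theorem continuous_flowCost (w : V → V → ℝ) : Continuous (flowCost w) := by
  unfold flowCost
  fun_prop

theorem isCompact_setOf_isFlow (c : V → V → ℕ) (s t : V) :
    IsCompact {f : V → V → ℝ | IsFlow c s t f} := by
  refine (isCompact_univ_pi fun u => isCompact_univ_pi fun v =>
    isCompact_Icc (a := (0 : ℝ)) (b := c u v)).of_isClosed_subset ?_
    fun f hf u _ v _ => hf.1 u v
  simp only [IsFlow, Set.ofPred_and, Set.ofPred_forall]
  refine .inter (isClosed_iInter fun u => isClosed_iInter fun v => .inter ?_ ?_)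
    (isClosed_iInter fun v => isClosed_iInter fun _ => isClosed_iInter fun _ => ?_)
  all_goals first
    | exact isClosed_le (by fun_prop) (by fun_prop)
    | exact isClosed_eq (by fun_prop) (by fun_prop)

theorem isCompact_setOf_isMinCostMaxFlow (c : V → V → ℕ) (w : V → V → ℝ) (s t : V) :
    IsCompact {f | IsMinCostMaxFlow c w s t f} ∧ {f | IsMinCostMaxFlow c w s t f}.Nonempty := by
  have hflows := isCompact_setOf_isFlow c s t
  have hmax := hflows.isCompact_setOf_forall_le (continuous_flowValue s)
  have hmaxne := hflows.nonempty_setOf_forall_le ⟨0, fun _ _ => ⟨le_rfl, by positivity⟩,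
    fun _ _ _ => rfl⟩ (continuous_flowValue s)
  -- minimising the cost is maximising it for the reversed order
  have hcost : Continuous fun f => OrderDual.toDual (flowCost w f) :=
    continuous_toDual.comp (continuous_flowCost w)
  exact ⟨hmax.isCompact_setOf_forall_le hcost, hmax.nonempty_setOf_forall_le hmaxne hcost⟩

end

theorem eq_zero_of_add_mem_of_sub_mem_of_mem_extremePoints {E : Type*} [AddCommGroup E]
    [Module ℝ E] {A : Set E} {x e : E} (hx : x ∈ A.extremePoints ℝ) (h₁ : x + e ∈ A)
    (h₂ : x - e ∈ A) : e = 0 := by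
  have hmid : x ∈ openSegment ℝ (x + e) (x - e) :=
    ⟨1 / 2, 1 / 2, by norm_num, by norm_num, by norm_num, by module⟩
  simpa using ((mem_extremePoints.1 hx).2 _ h₁ _ h₂ hmid).1

/-- In a flow network with integer capacities, there is a minimum-cost
maximum flow that is integral. -/
theorem exists_integral_minCost_maxFlow
    (c : V → V → ℕ) (w : V → V → ℝ) (s t : V) :
    ∃ f : V → V → ℝ, IsFlow c s t f ∧
      (∀ g, IsFlow c s t g → flowValue s g ≤ flowValue s f) ∧
      (∀ g, IsFlow c s t g →
        (∀ g', IsFlow c s t g' → flowValue s g' ≤ flowValue s g) →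
        flowCost w f ≤ flowCost w g) ∧
      (∀ u v, ∃ z : ℤ, f u v = (z : ℝ)) := by
  obtain ⟨hcompact, hne⟩ := isCompact_setOf_isMinCostMaxFlow c w s t
  obtain ⟨f, hext⟩ := hcompact.extremePoints_nonempty hne
  have hf : IsMinCostMaxFlow c w s t f := hext.1
  refine ⟨f, hf.1.1, hf.1.2, fun g hg hgmax => hf.2 g ⟨hg, hgmax⟩, ?_⟩
  by_contra! hfrac
  obtain ⟨a, b, hab⟩ := hfrac
  have hint (x : ℝ) : x ∈ AddSubgroup.zmultiples (1 : ℝ) ↔ ∃ z : ℤ, x = z := by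
    simp only [AddSubgroup.mem_zmultiples_iff, zsmul_eq_mul, mul_one, eq_comm]
  obtain ⟨d, hd0, hdsupp, hdnet⟩ := exists_supported_netFlow_eq_zero_of_notMem
    (AddSubgroup.zmultiples 1) (fun v hs ht => hf.1.1.netFlow_eq_zero hs ht ▸ zero_mem _)
    (a := a) (b := b) (by simpa [hint] using hab)
  -- `f u v` is not an integer, while its bounds `0` and `c u v` are
  have hslack (u v : V) (huv : d u v ≠ 0) : 0 < f u v ∧ f u v < c u v := by
    have hfrac : ∀ z : ℤ, f u v ≠ z := by simpa [hint] using mt (hdsupp u v) huv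
    exact ⟨(hf.1.1.1 u v).1.lt_of_ne' (by simpa using hfrac 0),
      (hf.1.1.1 u v).2.lt_of_ne (by exact_mod_cast hfrac (c u v))⟩
  obtain ⟨ε, hε, h₁, h₂⟩ := hf.1.1.exists_add_smul_and_sub_smul hslack hdnet
  have hopt := hf.add_and_sub h₁ h₂
  exact hd0 <| (smul_eq_zero.1 <|
    eq_zero_of_add_mem_of_sub_mem_of_mem_extremePoints hext hopt.1 hopt.2).resolve_left hε.ne'
end

section
/- Lindström–Gessel–Viennot type identity for the controllability matrix: let A = (a_{ij}) and B = (b_{ij}) be matrices of indeterminates (entries in a commutative ring, with some entries possibly zero). For index sets I ⊆ [n] of rows and J a set of columns of C_l(A,B) with |I| = |J|, det C_l(I,J) = ∑_L sign(L) w(L), where the sum ranges over all vertex-disjoint path families (linkings) L in the dynamic graph D_l(A,B) from the column-vertices J to the row-vertices I, w(L) is the product of edge weights along all paths of L, and sign(L) is the sign of the induced permutation between ordered tails and heads. -/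
open Finset

/-- The `k`-step controllability matrix over a commutative ring `R`. -/
def ctrlMatR (R : Type*) [CommRing R] {n m : ℕ}
    (A : Matrix (Fin n) (Fin n) R) (B : Matrix (Fin n) (Fin m) R) (k : ℕ) :
    Matrix (Fin n) (Fin k × Fin m) R :=
  fun i jc => (A ^ (jc.1 : ℕ) * B) i jc.2

/-- The weight of the path `u_j^κ → x_{σ κ}^κ → x_{σ(κ-1)}^{κ-1} → ⋯ → x_{σ 0}^0`
in the dynamic graph `D_l(A,B)`: the product of its edge weights. -/
def pathWeight {R : Type*} [CommRing R] {n m : ℕ}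
    (A : Matrix (Fin n) (Fin n) R) (B : Matrix (Fin n) (Fin m) R)
    (σ : ℕ → Fin n) (κ : ℕ) (j : Fin m) : R :=
  B (σ κ) j * ∏ t ∈ Finset.range κ, A (σ t) (σ (t + 1))

/-- `x = (π, σ)` is a `(J,I)`-linking in the dynamic graph `D_l(A,B)`: a family of
pairwise vertex-disjoint paths, the `a`-th going from the input vertex of column
`Jf (π a)` down to the first-layer state vertex `If a` (the path for column
`(κ, j)` visits state `σ a t` at layer `t` for `t ≤ κ`; values beyond layer `κ`
are frozen so that the representation is unique). -/
def IsLinking {n m l r : ℕ} (If : Fin r → Fin n) (Jf : Fin r → Fin l × Fin m)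
    (x : Equiv.Perm (Fin r) × (Fin r → ℕ → Fin n)) : Prop :=
  (∀ a, x.2 a 0 = If a) ∧
  (∀ a t, ((Jf (x.1 a)).1 : ℕ) ≤ t → x.2 a t = x.2 a ((Jf (x.1 a)).1 : ℕ)) ∧
  (∀ a b, a ≠ b → ∀ t, t ≤ ((Jf (x.1 a)).1 : ℕ) → t ≤ ((Jf (x.1 b)).1 : ℕ) →
    x.2 a t ≠ x.2 b t)

/-!
Expanding the minor by the Leibniz formula, and each entry `(A ^ κ * B) i j` as a sum over the
walks from `u_j^(κ+1)` down to `x_i^1`, writes it as the signed sum of the weights of all families of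
walks. When two walks of a family share a vertex, exchanging their parts beyond the first shared
layer (and with them their sources) flips the sign and keeps the weight. Taking "first"
lexicographically (least walk, then earliest layer, then least partner) makes this exchange an
involution on the families that are not linkings, so their contributions cancel.
-/

lemma Finset.prod_apply_swap {ι M : Type*} [CommMonoid M] [Fintype ι] [DecidableEq ι]
    (F : ι → ι → M) {a b : ι} (hab : a ≠ b) (h : F a b * F b a = F a a * F b b) :
    ∏ c, F c (Equiv.swap a b c) = ∏ c, F c c := by
  rw [← Finset.prod_mul_prod_compl {a, b}, ← Finset.prod_mul_prod_compl {a, b} fun c => F c c,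
    Finset.prod_pair hab, Finset.prod_pair hab, Equiv.swap_apply_left, Equiv.swap_apply_right, h]
  refine congrArg _ (Finset.prod_congr rfl fun c hc => ?_)
  simp only [Finset.mem_compl, Finset.mem_insert, Finset.mem_singleton, not_or] at hc
  rw [Equiv.swap_apply_of_ne_of_ne hc.1 hc.2]

namespace LGV

variable {R : Type*} [CommRing R] {n m l r : ℕ}

/-- The walk `i, f 0, …, f (κ-1)` read as a function of the layer, constant from layer `κ` on. -/
def extendPath (i : Fin n) (κ : ℕ) (f : Fin κ → Fin n) (t : ℕ) : Fin n :=
  (Fin.cons i f : Fin (κ + 1) → Fin n) ⟨min t κ, Nat.lt_succ_of_le (min_le_right t κ)⟩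

@[simp]
lemma extendPath_zero (i : Fin n) (κ : ℕ) (f : Fin κ → Fin n) : extendPath i κ f 0 = i := by
  simp [extendPath]

lemma extendPath_succ (i : Fin n) (κ : ℕ) (f : Fin κ → Fin n) {s : ℕ} (hs : s < κ) :
    extendPath i κ f (s + 1) = f ⟨s, hs⟩ := by
  have : (⟨min (s + 1) κ, Nat.lt_succ_of_le (min_le_right _ κ)⟩ : Fin (κ + 1)) =
      Fin.succ ⟨s, hs⟩ := by
    ext; simp; omega
  rw [extendPath, this, Fin.cons_succ]

lemma extendPath_of_le (i : Fin n) (κ : ℕ) (f : Fin κ → Fin n) {t : ℕ} (ht : κ ≤ t) :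
    extendPath i κ f t = extendPath i κ f κ := by
  simp [extendPath, min_eq_right ht]

lemma extendPath_cons_succ (i i' : Fin n) (κ : ℕ) (g : Fin κ → Fin n) (t : ℕ) :
    extendPath i (κ + 1) (Fin.cons i' g) (t + 1) = extendPath i' κ g t := by
  have : (⟨min (t + 1) (κ + 1), Nat.lt_succ_of_le (min_le_right _ _)⟩ : Fin (κ + 2)) =
      Fin.succ ⟨min t κ, Nat.lt_succ_of_le (min_le_right t κ)⟩ := by
    ext; simp
  rw [extendPath, this, Fin.cons_succ, extendPath]

lemma extendPath_eq_self {σ : ℕ → Fin n} {κ : ℕ} (hσ : ∀ t, κ ≤ t → σ t = σ κ) :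
    extendPath (σ 0) κ (fun s => σ (s + 1)) = σ := by
  have hle : ∀ t ≤ κ, extendPath (σ 0) κ (fun s => σ (s + 1)) t = σ t := by
    rintro (_ | s) hs
    · exact extendPath_zero _ _ _
    · exact extendPath_succ _ _ _ hs
  funext t
  rcases le_total t κ with ht | ht
  · exact hle t ht
  · rw [extendPath_of_le _ _ _ ht, hle κ le_rfl, hσ t ht]

lemma pathWeight_extendPath_cons (A : Matrix (Fin n) (Fin n) R) (B : Matrix (Fin n) (Fin m) R)
    (κ : ℕ) (i i' : Fin n) (g : Fin κ → Fin n) (j : Fin m) :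
    pathWeight A B (extendPath i (κ + 1) (Fin.cons i' g)) (κ + 1) j =
      A i i' * pathWeight A B (extendPath i' κ g) κ j := by
  simp only [pathWeight, Finset.prod_range_succ', extendPath_cons_succ, extendPath_zero]
  ring

lemma pow_mul_apply_eq_sum_pathWeight (A : Matrix (Fin n) (Fin n) R)
    (B : Matrix (Fin n) (Fin m) R) (κ : ℕ) (i : Fin n) (j : Fin m) :
    (A ^ κ * B) i j = ∑ f : Fin κ → Fin n, pathWeight A B (extendPath i κ f) κ j := by
  induction κ generalizing i with
  | zero => simp [pathWeight]
  | succ κ ih =>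
    rw [pow_succ', Matrix.mul_assoc, Matrix.mul_apply,
      ← (Fin.consEquiv fun _ : Fin (κ + 1) => Fin n).sum_comp, Fintype.sum_prod_type]
    refine Finset.sum_congr rfl fun i' _ => ?_
    rw [ih, Finset.mul_sum]
    exact Finset.sum_congr rfl fun g _ => (pathWeight_extendPath_cons A B κ i i' g j).symm

lemma pathWeight_eq_mul (A : Matrix (Fin n) (Fin n) R) (B : Matrix (Fin n) (Fin m) R)
    (σ : ℕ → Fin n) {t κ : ℕ} (ht : t ≤ κ) (j : Fin m) :
    pathWeight A B σ κ j =
      (∏ s ∈ Finset.range t, A (σ s) (σ (s + 1))) *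
        (B (σ κ) j * ∏ s ∈ Finset.Ico t κ, A (σ s) (σ (s + 1))) := by
  rw [pathWeight, ← Finset.prod_range_mul_prod_Ico _ ht]
  ring

section Splice

def splice (σ τ : ℕ → Fin n) (t : ℕ) (s : ℕ) : Fin n := if s ≤ t then σ s else τ s

variable {σ τ : ℕ → Fin n} {t s : ℕ}

lemma splice_of_le (hs : s ≤ t) : splice σ τ t s = σ s := if_pos hs

lemma splice_of_lt (hs : t < s) : splice σ τ t s = τ s := if_neg (not_le.2 hs)

lemma splice_of_ge (hστ : σ t = τ t) (hs : t ≤ s) : splice σ τ t s = τ s := by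
  rcases hs.eq_or_lt with rfl | hs
  · rw [splice_of_le le_rfl, hστ]
  · exact splice_of_lt hs

@[simp]
lemma splice_self (σ : ℕ → Fin n) (t : ℕ) : splice σ σ t = σ := by
  funext s; simp [splice]

lemma splice_splice (σ τ : ℕ → Fin n) (t : ℕ) : splice (splice σ τ t) (splice τ σ t) t = σ := by
  funext s; by_cases hs : s ≤ t <;> simp [splice, hs]

lemma pathWeight_splice (A : Matrix (Fin n) (Fin n) R) (B : Matrix (Fin n) (Fin m) R)
    {κ : ℕ} (ht : t ≤ κ) (hστ : σ t = τ t) (j : Fin m) :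
    pathWeight A B (splice σ τ t) κ j =
      (∏ s ∈ Finset.range t, A (σ s) (σ (s + 1))) *
        (B (τ κ) j * ∏ s ∈ Finset.Ico t κ, A (τ s) (τ (s + 1))) := by
  rw [pathWeight_eq_mul A B _ ht, splice_of_ge hστ ht]
  congr 1
  · refine Finset.prod_congr rfl fun s hs => ?_
    rw [Finset.mem_range] at hs
    rw [splice_of_le hs.le, splice_of_le hs]
  · refine congrArg _ (Finset.prod_congr rfl fun s hs => ?_)
    rw [Finset.mem_Ico] at hs
    rw [splice_of_ge hστ hs.1, splice_of_lt (Nat.lt_succ_of_le hs.1)]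

lemma pathWeight_splice_mul_pathWeight_splice (A : Matrix (Fin n) (Fin n) R)
    (B : Matrix (Fin n) (Fin m) R) {κ κ' : ℕ} (hκ : t ≤ κ) (hκ' : t ≤ κ') (hστ : σ t = τ t)
    (j j' : Fin m) :
    pathWeight A B (splice σ τ t) κ' j' * pathWeight A B (splice τ σ t) κ j =
      pathWeight A B σ κ j * pathWeight A B τ κ' j' := by
  rw [pathWeight_splice A B hκ' hστ, pathWeight_splice A B hκ hστ.symm,
    pathWeight_eq_mul A B σ hκ, pathWeight_eq_mul A B τ hκ']
  ring

end Splice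

section Families

/-- Walk `a` of a family runs from column `Jf (x.1 a)` to row `If a`. -/
abbrev PathFamily (n r : ℕ) := Equiv.Perm (Fin r) × (Fin r → ℕ → Fin n)

/-- The index set of the Leibniz formula expanded along walks: a permutation together with the
vertices after the first one of each walk. -/
abbrev WalkChoice (n : ℕ) (Jf : Fin r → Fin l × Fin m) :=
  Σ σ : Equiv.Perm (Fin r), ∀ a, Fin ((Jf (σ a)).1 : ℕ) → Fin n

variable (Jf : Fin r → Fin l × Fin m)

def pathLength (x : PathFamily n r) (a : Fin r) : ℕ := ((Jf (x.1 a)).1 : ℕ)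

structure IsAdmissible (If : Fin r → Fin n) (x : PathFamily n r) : Prop where
  apply_zero : ∀ a, x.2 a 0 = If a
  apply_of_le : ∀ a t, pathLength Jf x a ≤ t → x.2 a t = x.2 a (pathLength Jf x a)

structure IsCollision (x : PathFamily n r) (a b : Fin r) (t : ℕ) : Prop where
  ne : a ≠ b
  le_left : t ≤ pathLength Jf x a
  le_right : t ≤ pathLength Jf x b
  apply_eq : x.2 a t = x.2 b t

def signedWeight (A : Matrix (Fin n) (Fin n) R) (B : Matrix (Fin n) (Fin m) R)
    (x : PathFamily n r) : R :=
  ((Equiv.Perm.sign x.1 : ℤ) : R) * ∏ a, pathWeight A B (x.2 a) (pathLength Jf x a) (Jf (x.1 a)).2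

lemma isLinking_iff (If : Fin r → Fin n) (x : PathFamily n r) :
    IsLinking If Jf x ↔ IsAdmissible Jf If x ∧ ∀ a b t, ¬IsCollision Jf x a b t :=
  ⟨fun ⟨h0, hle, hne⟩ => ⟨⟨h0, hle⟩, fun a b t ⟨hab, ha, hb, he⟩ => hne a b hab t ha hb he⟩,
    fun ⟨⟨h0, hle⟩, hc⟩ => ⟨h0, hle, fun a b hab t ha hb he => hc a b t ⟨hab, ha, hb, he⟩⟩⟩

variable {Jf}

def familyOfWalks (If : Fin r → Fin n) (p : WalkChoice n Jf) : PathFamily n r :=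
  (p.1, fun a => extendPath (If a) _ (p.2 a))

variable (Jf) in
def walksOfFamily (x : PathFamily n r) : WalkChoice n Jf :=
  ⟨x.1, fun a s => x.2 a (s + 1)⟩

lemma isAdmissible_familyOfWalks (If : Fin r → Fin n) (p : WalkChoice n Jf) :
    IsAdmissible Jf If (familyOfWalks If p) :=
  ⟨fun a => extendPath_zero (If a) _ (p.2 a), fun a _ ht => extendPath_of_le (If a) _ (p.2 a) ht⟩

lemma walksOfFamily_familyOfWalks (If : Fin r → Fin n) (p : WalkChoice n Jf) :
    walksOfFamily Jf (familyOfWalks If p) = p :=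
  congrArg (Sigma.mk p.1) (funext fun _ => funext fun s => extendPath_succ _ _ _ s.isLt)

lemma familyOfWalks_walksOfFamily {If : Fin r → Fin n} {x : PathFamily n r}
    (hx : IsAdmissible Jf If x) : familyOfWalks If (walksOfFamily Jf x) = x := by
  refine Prod.ext rfl (funext fun a => ?_)
  have := extendPath_eq_self (hx.apply_of_le a)
  rwa [hx.apply_zero] at this

variable (Jf)

lemma finite_setOf_isAdmissible (If : Fin r → Fin n) :
    {x : PathFamily n r | IsAdmissible Jf If x}.Finite :=
  (Set.finite_range (familyOfWalks If : WalkChoice n Jf → _)).subset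
    fun _ hx => ⟨walksOfFamily Jf _, familyOfWalks_walksOfFamily hx⟩

noncomputable def admissibleFamilies (If : Fin r → Fin n) : Finset (PathFamily n r) :=
  (finite_setOf_isAdmissible Jf If).toFinset

lemma mem_admissibleFamilies {If : Fin r → Fin n} {x : PathFamily n r} :
    x ∈ admissibleFamilies Jf If ↔ IsAdmissible Jf If x :=
  Set.Finite.mem_toFinset _

lemma det_submatrix_ctrlMatR_eq_sum_signedWeight (A : Matrix (Fin n) (Fin n) R)
    (B : Matrix (Fin n) (Fin m) R) (If : Fin r → Fin n) :
    ((ctrlMatR R A B l).submatrix If Jf).det =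
      ∑ x ∈ admissibleFamilies Jf If, signedWeight Jf A B x := by
  have hwalks : ((ctrlMatR R A B l).submatrix If Jf).det =
      ∑ p : WalkChoice n Jf, signedWeight Jf A B (familyOfWalks If p) := by
    rw [← Matrix.det_transpose, Matrix.det_apply', ← Finset.univ_sigma_univ, Finset.sum_sigma]
    refine Finset.sum_congr rfl fun σ _ => ?_
    simp only [Matrix.transpose_apply, Matrix.submatrix_apply, ctrlMatR,
      pow_mul_apply_eq_sum_pathWeight, Finset.prod_univ_sum, Finset.mul_sum]
    rfl
  rw [hwalks]
  exact Finset.sum_nbij' (familyOfWalks If) (walksOfFamily Jf)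
    (fun p _ => (mem_admissibleFamilies Jf).2 (isAdmissible_familyOfWalks If p))
    (fun _ _ => Finset.mem_univ _) (fun p _ => walksOfFamily_familyOfWalks If p)
    (fun _ hx => familyOfWalks_walksOfFamily ((mem_admissibleFamilies Jf).1 hx))
    (fun _ _ => rfl)

end Families

section Involution

variable {Jf : Fin r → Fin l × Fin m}

/-- Walks `a` and `b` exchange their parts beyond layer `t`, and with them their sources. -/
def swapAt (x : PathFamily n r) (a b : Fin r) (t : ℕ) : PathFamily n r :=
  (x.1 * Equiv.swap a b, fun c => splice (x.2 c) (x.2 (Equiv.swap a b c)) t)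

variable {x : PathFamily n r} {a b : Fin r} {t : ℕ}

lemma pathLength_swapAt (c : Fin r) :
    pathLength Jf (swapAt x a b t) c = pathLength Jf x (Equiv.swap a b c) := rfl

lemma swapAt_swapAt : swapAt (swapAt x a b t) a b t = x := by
  refine Prod.ext (by simp [swapAt, mul_assoc]) (funext fun c => ?_)
  simp only [swapAt, Equiv.swap_apply_self, splice_splice]

lemma swapAt_fst_ne (hab : a ≠ b) : (swapAt x a b t).1 ≠ x.1 := by
  simpa [swapAt, Equiv.swap_eq_one_iff] using hab

lemma IsCollision.apply_swap (h : IsCollision Jf x a b t) (c : Fin r) :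
    x.2 (Equiv.swap a b c) t = x.2 c t := by
  rcases eq_or_ne c a with rfl | hca
  · rw [Equiv.swap_apply_left, h.apply_eq]
  rcases eq_or_ne c b with rfl | hcb
  · rw [Equiv.swap_apply_right, h.apply_eq]
  · rw [Equiv.swap_apply_of_ne_of_ne hca hcb]

lemma IsCollision.le_pathLength_of_swap_ne (h : IsCollision Jf x a b t) {c : Fin r}
    (hc : Equiv.swap a b c ≠ c) : t ≤ pathLength Jf x c := by
  rcases (Equiv.swap_apply_ne_self_iff.1 hc).2 with rfl | rfl
  exacts [h.le_left, h.le_right]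

lemma IsCollision.swapAt (h : IsCollision Jf x a b t) :
    IsCollision Jf (swapAt x a b t) a b t where
  ne := h.ne
  le_left := by rw [pathLength_swapAt, Equiv.swap_apply_left]; exact h.le_right
  le_right := by rw [pathLength_swapAt, Equiv.swap_apply_right]; exact h.le_left
  apply_eq := by simp only [LGV.swapAt, splice_of_le le_rfl, h.apply_eq]

lemma IsAdmissible.swapAt {If : Fin r → Fin n} (hx : IsAdmissible Jf If x)
    (h : IsCollision Jf x a b t) : IsAdmissible Jf If (swapAt x a b t) where
  apply_zero c := by simp only [LGV.swapAt, splice_of_le (Nat.zero_le t), hx.apply_zero]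
  apply_of_le c s hs := by
    rw [pathLength_swapAt] at hs ⊢
    rcases eq_or_ne (Equiv.swap a b c) c with hc | hc
    · simp only [LGV.swapAt, hc, splice_self] at hs ⊢
      exact hx.apply_of_le c s hs
    · have ht := h.le_pathLength_of_swap_ne (c := Equiv.swap a b c) (by simpa using hc.symm)
      simp only [LGV.swapAt, splice_of_ge (h.apply_swap c).symm ht,
        splice_of_ge (h.apply_swap c).symm (ht.trans hs), hx.apply_of_le _ s hs]

lemma signedWeight_swapAt (A : Matrix (Fin n) (Fin n) R) (B : Matrix (Fin n) (Fin m) R)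
    (h : IsCollision Jf x a b t) :
    signedWeight Jf A B (swapAt x a b t) = -signedWeight Jf A B x := by
  classical
  have hprod := Finset.prod_apply_swap
    (fun c d => pathWeight A B (splice (x.2 c) (x.2 d) t) (pathLength Jf x d) (Jf (x.1 d)).2)
    h.ne (by simpa only [splice_self] using
      pathWeight_splice_mul_pathWeight_splice A B h.le_left h.le_right h.apply_eq _ _)
  simp only [splice_self] at hprod
  have hsign : Equiv.Perm.sign (swapAt x a b t).1 = -Equiv.Perm.sign x.1 := by
    simp [swapAt, Equiv.Perm.sign_swap h.ne]
  rw [signedWeight, signedWeight, hsign, ← hprod, Units.val_neg, Int.cast_neg, neg_mul]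
  rfl

variable {c d : Fin r} {s : ℕ}

lemma IsCollision.symm (h : IsCollision Jf x a b t) : IsCollision Jf x b a t :=
  ⟨h.ne.symm, h.le_right, h.le_left, h.apply_eq.symm⟩

lemma IsCollision.of_swapAt_of_le (h : IsCollision Jf x a b t)
    (h' : IsCollision Jf (LGV.swapAt x a b t) c d s) (hs : s ≤ t) : IsCollision Jf x c d s := by
  have hle : ∀ e, s ≤ pathLength Jf (LGV.swapAt x a b t) e → s ≤ pathLength Jf x e := by
    intro e he
    rcases eq_or_ne (Equiv.swap a b e) e with hsw | hsw
    · rwa [pathLength_swapAt, hsw] at he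
    · exact hs.trans (h.le_pathLength_of_swap_ne hsw)
  refine ⟨h'.ne, hle c h'.le_left, hle d h'.le_right, ?_⟩
  simpa only [LGV.swapAt, splice_of_le hs] using h'.apply_eq

lemma IsCollision.of_swapAt_of_lt (h' : IsCollision Jf (LGV.swapAt x a b t) c d s)
    (hs : t < s) :
    IsCollision Jf x (Equiv.swap a b c) (Equiv.swap a b d) s := by
  refine ⟨(Equiv.swap a b).injective.ne h'.ne, h'.le_left, h'.le_right, ?_⟩
  simpa only [LGV.swapAt, splice_of_lt hs] using h'.apply_eq

variable (Jf) in
structure IsFirstCollision (x : PathFamily n r) (a b : Fin r) (t : ℕ) : Prop where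
  isCollision : IsCollision Jf x a b t
  le_fst : ∀ c d s, IsCollision Jf x c d s → a ≤ c
  le_layer : ∀ d s, IsCollision Jf x a d s → t ≤ s
  le_snd : ∀ d, IsCollision Jf x a d t → b ≤ d

lemma exists_isFirstCollision (h : ∃ a b t, IsCollision Jf x a b t) :
    ∃ a b t, IsFirstCollision Jf x a b t := by
  obtain ⟨a, ⟨b₀, t₀, ha⟩, hamin⟩ :=
    wellFounded_lt.has_min {a | ∃ b t, IsCollision Jf x a b t} h
  obtain ⟨t, ⟨b₁, ht⟩, htmin⟩ := wellFounded_lt.has_min {t | ∃ b, IsCollision Jf x a b t}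
    ⟨t₀, b₀, ha⟩
  obtain ⟨b, hb, hbmin⟩ := wellFounded_lt.has_min {b | IsCollision Jf x a b t} ⟨b₁, ht⟩
  exact ⟨a, b, t, hb, fun c d s hc => not_lt.1 (hamin c ⟨d, s, hc⟩),
    fun d s hd => not_lt.1 (htmin s ⟨d, hd⟩), fun d hd => not_lt.1 (hbmin d hd)⟩

lemma IsFirstCollision.unique {a' b' : Fin r} {t' : ℕ} (h : IsFirstCollision Jf x a b t)
    (h' : IsFirstCollision Jf x a' b' t') : a = a' ∧ b = b' ∧ t = t' := by
  obtain rfl : a = a' :=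
    le_antisymm (h.le_fst _ _ _ h'.isCollision) (h'.le_fst _ _ _ h.isCollision)
  obtain rfl : t = t' :=
    le_antisymm (h.le_layer _ _ h'.isCollision) (h'.le_layer _ _ h.isCollision)
  exact ⟨rfl, le_antisymm (h.le_snd _ h'.isCollision) (h'.le_snd _ h.isCollision), rfl⟩

lemma IsFirstCollision.swapAt (h : IsFirstCollision Jf x a b t) :
    IsFirstCollision Jf (swapAt x a b t) a b t := by
  have hc := h.isCollision
  refine ⟨hc.swapAt, fun c d s h' => ?_, fun d s h' => ?_, fun d h' => ?_⟩
  · rcases le_or_gt s t with hs | hs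
    · exact h.le_fst _ _ _ (hc.of_swapAt_of_le h' hs)
    · have hac := h.le_fst _ _ _ (h'.of_swapAt_of_lt hs)
      rcases eq_or_ne c a with rfl | hca
      · exact le_rfl
      rcases eq_or_ne c b with rfl | hcb
      · exact h.le_fst _ _ _ hc.symm
      rwa [Equiv.swap_apply_of_ne_of_ne hca hcb] at hac
  · by_contra! hs
    exact absurd (h.le_layer _ _ (hc.of_swapAt_of_le h' hs.le)) (not_le.2 hs)
  · exact h.le_snd _ (hc.of_swapAt_of_le h' le_rfl)

variable (Jf) in
open Classical in
noncomputable def firstCollisionSwap (x : PathFamily n r) : PathFamily n r :=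
  if h : ∃ p : Fin r × Fin r × ℕ, IsFirstCollision Jf x p.1 p.2.1 p.2.2 then
    swapAt x h.choose.1 h.choose.2.1 h.choose.2.2
  else x

lemma firstCollisionSwap_eq (h : IsFirstCollision Jf x a b t) :
    firstCollisionSwap Jf x = swapAt x a b t := by
  have hex : ∃ p : Fin r × Fin r × ℕ, IsFirstCollision Jf x p.1 p.2.1 p.2.2 := ⟨(a, b, t), h⟩
  obtain ⟨ha, hb, ht⟩ := hex.choose_spec.unique h
  rw [firstCollisionSwap, dif_pos hex, ha, hb, ht]

lemma exists_isFirstCollision_of_not_isLinking {If : Fin r → Fin n}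
    (hx : IsAdmissible Jf If x) (hl : ¬IsLinking If Jf x) :
    ∃ a b t, IsFirstCollision Jf x a b t := by
  refine exists_isFirstCollision ?_
  by_contra! h
  exact hl ((isLinking_iff Jf If x).2 ⟨hx, h⟩)

open Classical in
lemma sum_signedWeight_filter_not_isLinking (A : Matrix (Fin n) (Fin n) R)
    (B : Matrix (Fin n) (Fin m) R) (If : Fin r → Fin n) :
    ∑ x ∈ admissibleFamilies Jf If with ¬IsLinking If Jf x, signedWeight Jf A B x = 0 := by
  have hfirst : ∀ x ∈ {x ∈ admissibleFamilies Jf If | ¬IsLinking If Jf x},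
      IsAdmissible Jf If x ∧ ∃ a b t, IsFirstCollision Jf x a b t := fun x hx => by
    rw [Finset.mem_filter, mem_admissibleFamilies] at hx
    exact ⟨hx.1, exists_isFirstCollision_of_not_isLinking hx.1 hx.2⟩
  refine Finset.sum_involution (fun x _ => firstCollisionSwap Jf x) (fun x hx => ?_)
    (fun x hx _ => ?_) (fun x hx => ?_) (fun x hx => ?_)
  all_goals
    obtain ⟨hadm, a, b, t, h⟩ := hfirst x hx
    rw [firstCollisionSwap_eq h]
  · rw [signedWeight_swapAt A B h.isCollision, add_neg_cancel]
  · exact fun heq => swapAt_fst_ne h.isCollision.ne (congrArg Prod.fst heq)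
  · rw [Finset.mem_filter, mem_admissibleFamilies, isLinking_iff, not_and]
    exact ⟨hadm.swapAt h.isCollision, fun _ hno => hno a b t h.isCollision.swapAt⟩
  · rw [firstCollisionSwap_eq h.swapAt, swapAt_swapAt]

end Involution

end LGV

theorem det_ctrlMat_submatrix_eq_sum_linkings_general
    (R : Type*) [CommRing R] {n m l r : ℕ}
    (A : Matrix (Fin n) (Fin n) R) (B : Matrix (Fin n) (Fin m) R)
    (If : Fin r → Fin n) (Jf : Fin r → Fin l × Fin m) :
    ((ctrlMatR R A B l).submatrix If Jf).det =
      ∑ᶠ x ∈ {x : Equiv.Perm (Fin r) × (Fin r → ℕ → Fin n) | IsLinking If Jf x},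
        ((Equiv.Perm.sign x.1 : ℤ) : R) *
          ∏ a : Fin r,
            pathWeight A B (x.2 a) ((Jf (x.1 a)).1 : ℕ) (Jf (x.1 a)).2 := by
  classical
  have hfin : {x | IsLinking If Jf x}.Finite := (LGV.finite_setOf_isAdmissible Jf If).subset
    fun x hx => ((LGV.isLinking_iff Jf If x).1 hx).1
  have hlinkings : hfin.toFinset = {x ∈ LGV.admissibleFamilies Jf If | IsLinking If Jf x} := by
    ext x
    rw [Set.Finite.mem_toFinset, Finset.mem_filter, LGV.mem_admissibleFamilies, Set.mem_ofPred_eq]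
    exact ⟨fun hx => ⟨((LGV.isLinking_iff Jf If x).1 hx).1, hx⟩, And.right⟩
  rw [finsum_mem_eq_finite_toFinset_sum _ hfin, hlinkings,
    LGV.det_submatrix_ctrlMatR_eq_sum_signedWeight, ← Finset.sum_filter_add_sum_filter_not _
      (IsLinking If Jf), LGV.sum_signedWeight_filter_not_isLinking, add_zero]
  rfl

/-- Lindström–Gessel–Viennot identity for the controllability matrix: for row
indices `If` and column indices `Jf` (both injective, `|I| = |J| = r`), the minor
`det C_l(I,J)` equals the signed sum of weights over all `(J,I)`-linkings in the
dynamic graph `D_l(A,B)`. -/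
theorem det_ctrlMat_submatrix_eq_sum_linkings
    (R : Type*) [CommRing R] {n m l r : ℕ}
    (A : Matrix (Fin n) (Fin n) R) (B : Matrix (Fin n) (Fin m) R)
    (If : Fin r → Fin n) (Jf : Fin r → Fin l × Fin m)
    (hI : Function.Injective If) (hJ : Function.Injective Jf) :
    ((ctrlMatR R A B l).submatrix If Jf).det =
      ∑ᶠ x ∈ {x : Equiv.Perm (Fin r) × (Fin r → ℕ → Fin n) | IsLinking If Jf x},
        ((Equiv.Perm.sign x.1 : ℤ) : R) *
          ∏ a : Fin r,
            pathWeight A B (x.2 a) ((Jf (x.1 a)).1 : ℕ) (Jf (x.1 a)).2 :=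
  det_ctrlMat_submatrix_eq_sum_linkings_general R A B If Jf
end

section
/- Genericity of the structural controllability index: let (A,B) be structured matrices with nonzero entries being independent real parameters, and suppose the structural controllability index is μ(A,B) = h, defined via generic ranks: h = min{k : gk C_k(A,B) = gk C_{k+1}(A,B)}. Then the set of parameter values (Ã,B̃) for which the (numerical) controllability index of (Ã,B̃) differs from h is contained in a proper algebraic variety of the parameter space; i.e., almost all realizations of (A,B) have controllability index exactly h. -/
open MvPolynomial

/-- The `k`-step controllability matrix `C_k(A,B) = [B, AB, ..., A^{k-1}B]`. -/
noncomputable def ctrlMat {n m : ℕ}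
    (A : Matrix (Fin n) (Fin n) ℝ) (B : Matrix (Fin n) (Fin m) ℝ) (k : ℕ) :
    Matrix (Fin n) (Fin k × Fin m) ℝ :=
  fun i jc => (A ^ (jc.1 : ℕ) * B) i jc.2

/-- The realization of a structured matrix with zero-nonzero pattern `p`
obtained by assigning the values `θ` to the free (nonzero) entries, all other
entries being fixed zeros. -/
def structReal {α β : Type*} (p : α → β → Bool) (θ : α → β → ℝ) :
    Matrix α β ℝ :=
  fun i j => if p i j then θ i j else 0

/-! For each `k`, the generic rank `g k` is attained at some realization, hence by a nonzero
`g k × g k` minor there. Read as a polynomial in the parameters, that minor is nonzero, and off its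
zero set `rank C_k` is at least, hence exactly, `g k`. The product of these minors over `k ≤ h + 1`
is the required `q`: where it does not vanish, the numerical ranks of `C_1, …, C_{h+1}` are the
generic ones, so their first plateau is the first plateau `h` of `g`. -/

namespace Matrix

variable {K : Type*} [Field K] {m n : Type*} [Fintype n]

theorem le_rank_of_submatrix_det_ne_zero (M : Matrix m n K) {r : ℕ} (f : Fin r → m)
    (g : Fin r → n) (hdet : (M.submatrix f g).det ≠ 0) : r ≤ M.rank := by
  simpa [rank_of_det_ne_zero hdet] using M.rank_submatrix_le f g

variable [Fintype m]

theorem exists_linearIndependent_rows (M : Matrix m n K) {r : ℕ} (hr : M.rank = r) :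
    ∃ f : Fin r → m, LinearIndependent K (M.submatrix f id).row := by
  obtain ⟨κ, a, ha, hspan, hli⟩ := exists_linearIndependent' K M.row
  have : Fintype κ := Fintype.ofInjective a ha
  have hcard : Fintype.card κ = r := by
    rw [finrank_span_eq_card hli |>.symm, hspan, ← rank_eq_finrank_span_row, hr]
  classical
  let e := Fintype.equivFinOfCardEq hcard
  exact ⟨a ∘ e.symm, hli.comp e.symm e.symm.injective⟩

theorem exists_submatrix_det_ne_zero (M : Matrix m n K) {r : ℕ} (hr : M.rank = r) :
    ∃ (f : Fin r → m) (g : Fin r → n), (M.submatrix f g).det ≠ 0 := by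
  obtain ⟨f, hf⟩ := M.exists_linearIndependent_rows hr
  have hrank : (M.submatrix f id)ᵀ.rank = r := by
    rw [rank_transpose, hf.rank_matrix, Fintype.card_fin]
  obtain ⟨g, hg⟩ := (M.submatrix f id)ᵀ.exists_linearIndependent_rows hrank
  have hunit : IsUnit (M.submatrix f g)ᵀ := linearIndependent_rows_iff_isUnit.mp hg
  rw [isUnit_transpose, isUnit_iff_isUnit_det] at hunit
  exact ⟨f, g, hunit.ne_zero⟩

theorem exists_ne_zero_rank_le_rank_map_eval {σ : Type*} (M : Matrix m n (MvPolynomial σ K)) (v₀ : σ → K) :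
    ∃ q : MvPolynomial σ K, q ≠ 0 ∧
      ∀ v, eval v q ≠ 0 → (M.map (eval v₀)).rank ≤ (M.map (eval v)).rank := by
  have eval_minor : ∀ {r : ℕ} (f : Fin r → m) (g : Fin r → n) (v : σ → K),
      eval v (M.submatrix f g).det = ((M.map (eval v)).submatrix f g).det := by
    intro r f g v
    rw [RingHom.map_det, RingHom.mapMatrix_apply, submatrix_map]
  obtain ⟨f, g, hdet⟩ := (M.map (eval v₀)).exists_submatrix_det_ne_zero rfl
  refine ⟨(M.submatrix f g).det, fun h0 => hdet ?_, fun v hv => ?_⟩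
  · rw [← eval_minor, h0, map_zero]
  · exact (M.map (eval v)).le_rank_of_submatrix_det_ne_zero f g (eval_minor f g v ▸ hv)

end Matrix

noncomputable def structMvPoly {α β σ : Type*} (p : α → β → Bool) (x : α → β → σ) :
    Matrix α β (MvPolynomial σ ℝ) :=
  Matrix.of fun i j => if p i j then X (x i j) else 0

theorem structMvPoly_map_eval {α β σ : Type*} (p : α → β → Bool) (x : α → β → σ)
    (v : σ → ℝ) : (structMvPoly p x).map (eval v) = structReal p (fun i j => v (x i j)) := by
  ext i j
  simp only [structMvPoly, structReal, Matrix.map_apply, Matrix.of_apply]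
  split_ifs <;> simp

def ctrlMatOver {R : Type*} [Semiring R] {n m : ℕ} (A : Matrix (Fin n) (Fin n) R)
    (B : Matrix (Fin n) (Fin m) R) (k : ℕ) : Matrix (Fin n) (Fin k × Fin m) R :=
  Matrix.of fun i jc => (A ^ (jc.1 : ℕ) * B) i jc.2

theorem ctrlMatOver_map {R : Type*} [CommSemiring R] {n m : ℕ} (φ : R →+* ℝ)
    (A : Matrix (Fin n) (Fin n) R) (B : Matrix (Fin n) (Fin m) R) (k : ℕ) :
    (ctrlMatOver A B k).map φ = ctrlMat (A.map φ) (B.map φ) k := by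
  ext i jc
  simp only [ctrlMatOver, ctrlMat, Matrix.map_apply, Matrix.of_apply]
  rw [← Matrix.map_apply (f := φ), Matrix.map_mul, ← RingHom.mapMatrix_apply, map_pow]
  rfl

theorem exists_ne_zero_rank_ctrlMat_eq {n m : ℕ} (pA : Fin n → Fin n → Bool)
    (pB : Fin n → Fin m → Bool) (k r : ℕ)
    (hub : ∀ θA θB, (ctrlMat (structReal pA θA) (structReal pB θB) k).rank ≤ r)
    (hat : ∃ θA θB, (ctrlMat (structReal pA θA) (structReal pB θB) k).rank = r) :
    ∃ q : MvPolynomial ((Fin n × Fin n) ⊕ (Fin n × Fin m)) ℝ, q ≠ 0 ∧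
      ∀ (θA : Fin n → Fin n → ℝ) (θB : Fin n → Fin m → ℝ),
        eval (Sum.elim (fun e => θA e.1 e.2) (fun e => θB e.1 e.2)) q ≠ 0 →
        (ctrlMat (structReal pA θA) (structReal pB θB) k).rank = r := by
  let C := ctrlMatOver (structMvPoly pA fun i j => Sum.inl (i, j))
    (structMvPoly pB fun i j => Sum.inr (i, j)) k
  have hC : ∀ θA θB, C.map (eval (Sum.elim (fun e => θA e.1 e.2) (fun e => θB e.1 e.2))) =
      ctrlMat (structReal pA θA) (structReal pB θB) k := fun θA θB => by
    rw [ctrlMatOver_map, structMvPoly_map_eval, structMvPoly_map_eval]; rfl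
  obtain ⟨θA₀, θB₀, hr⟩ := hat
  obtain ⟨q, hq, hge⟩ := C.exists_ne_zero_rank_le_rank_map_eval
    (Sum.elim (fun e => θA₀ e.1 e.2) (fun e => θB₀ e.1 e.2))
  refine ⟨q, hq, fun θA θB hv => (hub θA θB).antisymm ?_⟩
  simpa only [hC, hr] using hge _ hv

theorem sInf_plateau_eq_of_agree {r g : ℕ → ℕ} {h : ℕ} (hrg : ∀ k ≤ h + 1, r k = g k)
    (hh1 : 1 ≤ h) (hh2 : g h = g (h + 1)) (hh3 : ∀ k, 1 ≤ k → k < h → g k ≠ g (k + 1)) :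
    sInf {k | 1 ≤ k ∧ r k = r (k + 1)} = h := by
  have hmem : h ∈ {k | 1 ≤ k ∧ r k = r (k + 1)} :=
    ⟨hh1, by rw [hrg h (by omega), hrg (h + 1) le_rfl, hh2]⟩
  refine (Nat.sInf_le hmem).antisymm (le_csInf ⟨h, hmem⟩ fun k ⟨hk1, hk⟩ => ?_)
  by_contra! hlt
  rw [hrg k (by omega), hrg (k + 1) (by omega)] at hk
  exact hh3 k hk1 hlt hk

/-- Genericity of the structural controllability index: let `(A,B)` be a
structured pair with patterns `pA, pB` whose nonzero entries are independent
real parameters `(θA, θB)`, let `g k` be the generic rank of `C_k(A,B)` (the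
maximum of `rank C_k` over all realizations, attained by some realization), and
let `h ≥ 1` be the least index with `g h = g (h+1)` (the structural
controllability index). Then the realizations whose numerical controllability
index differs from `h` are contained in a proper algebraic variety of the
parameter space: there is a nonzero polynomial `q` in the entry parameters such
that every realization at which `q` does not vanish has controllability index
exactly `h`. -/
theorem structCtrlIndex_generic {n m : ℕ}
    (pA : Fin n → Fin n → Bool) (pB : Fin n → Fin m → Bool)
    (g : ℕ → ℕ)
    (hub : ∀ (k : ℕ) (θA : Fin n → Fin n → ℝ) (θB : Fin n → Fin m → ℝ),
      (ctrlMat (structReal pA θA) (structReal pB θB) k).rank ≤ g k)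
    (hat : ∀ k : ℕ, ∃ (θA : Fin n → Fin n → ℝ) (θB : Fin n → Fin m → ℝ),
      (ctrlMat (structReal pA θA) (structReal pB θB) k).rank = g k)
    (h : ℕ) (hh1 : 1 ≤ h) (hh2 : g h = g (h + 1))
    (hh3 : ∀ k, 1 ≤ k → k < h → g k ≠ g (k + 1)) :
    ∃ q : MvPolynomial ((Fin n × Fin n) ⊕ (Fin n × Fin m)) ℝ, q ≠ 0 ∧
      ∀ (θA : Fin n → Fin n → ℝ) (θB : Fin n → Fin m → ℝ),
        MvPolynomial.eval
            (Sum.elim (fun e => θA e.1 e.2) (fun e => θB e.1 e.2)) q ≠ 0 →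
        sInf {k : ℕ | 1 ≤ k ∧
            (ctrlMat (structReal pA θA) (structReal pB θB) k).rank =
              (ctrlMat (structReal pA θA) (structReal pB θB) (k + 1)).rank}
          = h := by
  choose q hq0 hq using fun k => exists_ne_zero_rank_ctrlMat_eq pA pB k (g k) (hub k) (hat k)
  refine ⟨∏ k ∈ Finset.range (h + 2), q k, Finset.prod_ne_zero_iff.2 fun k _ => hq0 k,
    fun θA θB hv => sInf_plateau_eq_of_agree (fun k hk => hq k θA θB ?_) hh1 hh2 hh3⟩
  rw [map_prod] at hv
  exact Finset.prod_ne_zero_iff.1 hv k (Finset.mem_range.2 (by omega))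
end
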